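/- For integers n, k, t ≥ 0 with 2t ≤ n, one has the identity Σ_{i=0}^{t} (−1)^i · C(t,i) · C(n−2i, k−2i) = Σ_{j=0}^{k} 2^j · C(t,j) · C(n−2t, k−j); equivalently, a(n,k,t) is the coefficient of y^k in (1+y)^{n−2t}(1+2y)^t. -/

import Mathlib

/-- Integer binomial coefficient: `intChoose a b` is zero unless `0 ≤ b ≤ a`. -/
def intChoose (a b : ℤ) : ℤ :=
  if 0 ≤ b ∧ b ≤ a then (a.toNat.choose b.toNat : ℤ) else 0

/-- `a(n,k,t) = ∑_{i=0}^t (-1)^i C(t,i) C(n-2i, k-2i)`. -/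
def aFun (n k t : ℕ) : ℤ :=
  ∑ i ∈ Finset.range (t + 1),
    (-1) ^ i * intChoose t i * intChoose ((n : ℤ) - 2 * i) ((k : ℤ) - 2 * i)

/-!
Since `1 + 2y = (1 + y)² - y²`, the binomial theorem gives
`(1 + y)^(n - 2t) (1 + 2y)^t = ∑ᵢ (-1)^i C(t,i) y^(2i) (1 + y)^(n - 2i)`,
whose coefficient of `y^k` is `a(n,k,t)`. Reading off the same coefficient from the product
`(1 + 2y)^t · (1 + y)^(n - 2t)` gives the other sum.
-/

open Polynomial Finset

lemma intChoose_natCast (a b : ℕ) : intChoose a b = a.choose b := by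
  unfold intChoose
  split_ifs
  · simp
  · rw [Nat.choose_eq_zero_of_lt (by omega), Nat.cast_zero]

lemma intChoose_natCast_sub_natCast (a b c : ℕ) (hca : c ≤ a) :
    intChoose ((a : ℤ) - c) ((b : ℤ) - c) = if c ≤ b then ((a - c).choose (b - c) : ℤ) else 0 := by
  split_ifs with hcb
  · rw [← Nat.cast_sub hca, ← Nat.cast_sub hcb, intChoose_natCast]
  · exact if_neg (by omega)

section CommSemiring

variable {R : Type*} [CommSemiring R]

lemma coeff_one_add_C_mul_X_pow (a : R) (t k : ℕ) :
    ((1 + C a * X) ^ t).coeff k = a ^ k * t.choose k := by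
  have hterm : ∀ m, ((C a * X) ^ m * 1 ^ (t - m) * (t.choose m : R[X])).coeff k =
      if m = k then a ^ k * t.choose k else 0 := by
    intro m
    rw [one_pow, mul_one, mul_pow, ← C_pow, ← C_eq_natCast, mul_right_comm, ← C_mul, coeff_C_mul,
      coeff_X_pow]
    split_ifs <;> simp_all
  rw [add_comm, add_pow, finsetSum_coeff, sum_congr rfl fun m _ => hterm m, sum_ite_eq']
  split_ifs with hk
  · rfl
  · rw [Nat.choose_eq_zero_of_lt (by simpa using hk), Nat.cast_zero, mul_zero]

lemma coeff_X_pow_mul_one_add_X_pow (m p k : ℕ) :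
    (X ^ m * (1 + X) ^ p : R[X]).coeff k = if m ≤ k then (p.choose (k - m) : R) else 0 := by
  rw [coeff_X_pow_mul', coeff_one_add_X_pow]

end CommSemiring

lemma one_add_X_pow_mul_one_add_two_X_pow {R : Type*} [CommRing R] (n t : ℕ) (h : 2 * t ≤ n) :
    (1 + X : R[X]) ^ (n - 2 * t) * (1 + 2 * X) ^ t =
      ∑ i ∈ range (t + 1), C ((-1) ^ i * (t.choose i : R)) * (X ^ (2 * i) * (1 + X) ^ (n - 2 * i)) := by
  have hsq : (1 + 2 * X : R[X]) = -X ^ 2 + (1 + X) ^ 2 := by ring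
  rw [hsq, add_pow (-X ^ 2), mul_sum]
  refine sum_congr rfl fun i hi => ?_
  have hexp : n - 2 * i = (n - 2 * t) + 2 * (t - i) := by
    have := mem_range.1 hi
    omega
  rw [hexp, pow_add, pow_mul (1 + X) 2, map_mul, map_pow, map_neg, map_one, map_natCast]
  ring

lemma aFun_eq_coeff (n k t : ℕ) (h : 2 * t ≤ n) :
    aFun n k t = ((1 + X : ℤ[X]) ^ (n - 2 * t) * (1 + 2 * X) ^ t).coeff k := by
  rw [one_add_X_pow_mul_one_add_two_X_pow n t h, finsetSum_coeff]
  refine sum_congr rfl fun i hi => ?_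
  have hin : 2 * i ≤ n := by
    have := mem_range.1 hi
    omega
  rw [coeff_C_mul, coeff_X_pow_mul_one_add_X_pow, intChoose_natCast,
    ← intChoose_natCast_sub_natCast n k (2 * i) hin, Nat.cast_mul, Nat.cast_ofNat]

lemma coeff_one_add_X_pow_mul_one_add_two_X_pow (n k t : ℕ) (h : 2 * t ≤ n) :
    ((1 + X : ℤ[X]) ^ (n - 2 * t) * (1 + 2 * X) ^ t).coeff k =
      ∑ j ∈ range (k + 1), 2 ^ j * intChoose t j * intChoose ((n : ℤ) - 2 * t) ((k : ℤ) - j) := by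
  rw [mul_comm, coeff_mul, Nat.sum_antidiagonal_eq_sum_range_succ_mk]
  refine sum_congr rfl fun j hj => ?_
  have hnt : (n : ℤ) - 2 * t = ((n - 2 * t : ℕ) : ℤ) := by omega
  have hkj : (k : ℤ) - j = ((k - j : ℕ) : ℤ) := by
    have := mem_range.1 hj
    omega
  rw [← C_ofNat (R := ℤ) 2, coeff_one_add_C_mul_X_pow, coeff_one_add_X_pow, intChoose_natCast, hnt,
    hkj, intChoose_natCast]

theorem stmt_11 (n k t : ℕ) (h2t : 2 * t ≤ n) :
    aFun n k t =
      ∑ j ∈ Finset.range (k + 1), 2 ^ j * intChoose t j * intChoose ((n : ℤ) - 2 * t) ((k : ℤ) - j) ∧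
    aFun n k t =
      (((1 + Polynomial.X : Polynomial ℤ) ^ (n - 2 * t) *
        (1 + 2 * Polynomial.X) ^ t).coeff k) :=
  ⟨(aFun_eq_coeff n k t h2t).trans (coeff_one_add_X_pow_mul_one_add_two_X_pow n k t h2t),
    aFun_eq_coeff n k t h2t⟩
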